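/- Under the assumptions of the centered third-order expansion (ξ ∈ L³_μ(Ω;X), E[ξ]=0, Q ∈ C³, R ∈ C³ ∩ L²), the posterior covariance satisfies Cov_{μ^δ}[R(x₀+ξ)] = E[ DR(x₀)[ξ] ⊗ DR(x₀)[ξ] ] + O(‖ξ‖³_{L³_μ(Ω;X)}), i.e., to leading order the posterior covariance equals the prior correlation of the linearized prediction and is independent of the data η. -/

import Mathlib

set_option maxHeartbeats 1000000

open MeasureTheory ENNReal Matrix

noncomputable def Kdel (c L k : ℝ) : ℝ := c⁻¹ * ((1 + L) * k)
noncomputable def Cfun (c L k : ℝ) : ℝ :=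
  c⁻¹ * (4*k^2 + 2*L*k^2 + k * Kdel c L k + 4*k * Kdel c L k + (Kdel c L k)^2)


lemma helper_integral_norm_pow_eq {Ω : Type*} [MeasurableSpace Ω] (μ : Measure Ω)
    {X : Type*} [NormedAddCommGroup X]
    (f : Ω → X) (n : ℕ) (hn : n ≠ 0) (hf : MemLp f n μ) :
    ∫ ω, ‖f ω‖ ^ n ∂μ = ((eLpNorm f n μ).toReal) ^ n := by
  have hn' : (n : ℝ≥0∞) ≠ 0 := by exact_mod_cast Nat.cast_ne_zero.mpr hn
  have hnR : (0:ℝ) < n := by positivity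
  have hI0 : Integrable (fun ω => ‖f ω‖ ^ ((n : ℝ≥0∞)).toReal) μ :=
    hf.integrable_norm_rpow hn' (by simp)
  have key : ENNReal.ofReal (∫ ω, ‖f ω‖ ^ n ∂μ) = ∫⁻ ω, (‖f ω‖₊ : ℝ≥0∞) ^ (n : ℝ) ∂μ := by
    rw [MeasureTheory.ofReal_integral_eq_lintegral_ofReal]
    · congr 1; funext ω
      rw [← Real.rpow_natCast ‖f ω‖ n, ← ENNReal.ofReal_rpow_of_nonneg (norm_nonneg _) (le_of_lt hnR)]
      congr 1
      exact ofReal_norm_eq_enorm (f ω)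
    · simpa [ENNReal.toReal_natCast, Real.rpow_natCast] using hI0
    · filter_upwards with ω; positivity
  have hsn : eLpNorm f n μ = (∫⁻ ω, (‖f ω‖₊ : ℝ≥0∞) ^ (n:ℝ) ∂μ) ^ (1/(n:ℝ)) := by
    rw [eLpNorm_eq_lintegral_rpow_enorm_toReal hn' (by simp)]
    simp; rfl
  have hfin : (∫⁻ ω, (‖f ω‖₊ : ℝ≥0∞) ^ (n:ℝ) ∂μ) ≠ ∞ := by
    intro h
    have := hf.2
    rw [hsn, h] at this
    rw [ENNReal.top_rpow_of_pos (by positivity : (0:ℝ) < 1/(n:ℝ))] at this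
    exact (lt_irrefl _ this).elim
  have hpos : (0:ℝ) ≤ ∫ ω, ‖f ω‖ ^ n ∂μ := by positivity
  have := congrArg ENNReal.toReal key
  rw [ENNReal.toReal_ofReal hpos] at this
  rw [this, hsn, ← ENNReal.toReal_rpow]
  rw [← Real.rpow_natCast (((∫⁻ ω, (‖f ω‖₊ : ℝ≥0∞) ^ (n:ℝ) ∂μ)).toReal ^ (1/(n:ℝ))) n,
    ← Real.rpow_mul ENNReal.toReal_nonneg, one_div, inv_mul_cancel₀ (ne_of_gt hnR), Real.rpow_one]

lemma helper_integral_norm_pow_le {Ω : Type*} [MeasurableSpace Ω] (μ : Measure Ω)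
    [IsProbabilityMeasure μ] {X : Type*} [NormedAddCommGroup X]
    (f : Ω → X) (hf : MemLp f 3 μ) (n : ℕ) (hn : n ≠ 0) (h3 : (n : ℝ≥0∞) ≤ 3) :
    ∫ ω, ‖f ω‖ ^ n ∂μ ≤ ((eLpNorm f 3 μ).toReal) ^ n := by
  have hfn : MemLp f n μ := hf.mono_exponent h3
  rw [helper_integral_norm_pow_eq μ f n hn hfn]
  refine pow_le_pow_left₀ ENNReal.toReal_nonneg ?_ n
  exact ENNReal.toReal_mono hf.2.ne (eLpNorm_le_eLpNorm_of_exponent_le h3 hf.1)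

-- product of two L² real functions is integrable
lemma helper_integrable_mul {Ω : Type*} [MeasurableSpace Ω] {μ : Measure Ω}
    {f g : Ω → ℝ} (hf : MemLp f 2 μ) (hg : MemLp g 2 μ) :
    Integrable (fun ω => f ω * g ω) μ := by
  have h2 : ((2:ℝ≥0∞)) ≠ 0 := by norm_num
  have hf2 : Integrable (fun ω => ‖f ω‖ ^ ((2:ℝ≥0∞)).toReal) μ := hf.integrable_norm_rpow h2 (by norm_num)
  have hg2 : Integrable (fun ω => ‖g ω‖ ^ ((2:ℝ≥0∞)).toReal) μ := hg.integrable_norm_rpow h2 (by norm_num)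
  have hf2' : Integrable (fun ω => ‖f ω‖ ^ 2) μ := by simpa [Real.rpow_natCast] using hf2
  have hg2' : Integrable (fun ω => ‖g ω‖ ^ 2) μ := by simpa [Real.rpow_natCast] using hg2
  refine Integrable.mono' (((hf2'.add hg2').div_const 2)) (hf.1.mul hg.1) ?_
  filter_upwards with ω
  simp only [Pi.add_apply, norm_mul]
  nlinarith [sq_nonneg (‖f ω‖ - ‖g ω‖), norm_nonneg (f ω), norm_nonneg (g ω)]


-- small pointwise helper
lemma inner_mul_inner_le {Z : Type*} [NormedAddCommGroup Z] [InnerProductSpace ℝ Z]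
    (z1 z2 u v : Z) (n1 n2 : ℝ) (h1 : ‖z1‖ ≤ n1) (h2 : ‖z2‖ ≤ n2) :
    |(inner ℝ z1 u : ℝ) * (inner ℝ z2 v : ℝ)| ≤ (n1 * n2) * (‖u‖ * ‖v‖) := by
  rw [abs_mul]
  have e1 : |(inner ℝ z1 u : ℝ)| ≤ n1 * ‖u‖ :=
    (abs_real_inner_le_norm z1 u).trans
      (mul_le_mul_of_nonneg_right h1 (norm_nonneg u))
  have e2 : |(inner ℝ z2 v : ℝ)| ≤ n2 * ‖v‖ :=
    (abs_real_inner_le_norm z2 v).trans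
      (mul_le_mul_of_nonneg_right h2 (norm_nonneg v))
  calc |(inner ℝ z1 u : ℝ)| * |(inner ℝ z2 v : ℝ)| ≤ (n1 * ‖u‖) * (n2 * ‖v‖) :=
        mul_le_mul e1 e2 (abs_nonneg _) (le_trans (abs_nonneg _) e1)
    _ = (n1 * n2) * (‖u‖ * ‖v‖) := by ring


-- exp is 1-Lipschitz on nonpositive reals
lemma exp_lip_nonpos {a b : ℝ} (ha : a ≤ 0) (hb : b ≤ 0) :
    |Real.exp a - Real.exp b| ≤ |a - b| := by
  wlog h : b ≤ a generalizing a b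
  · rw [abs_sub_comm, abs_sub_comm a b]; exact this hb ha (le_of_not_ge h)
  rw [abs_of_nonneg (sub_nonneg.mpr (Real.exp_le_exp.mpr h)), abs_of_nonneg (sub_nonneg.mpr h)]
  have h1 : Real.exp a ≤ 1 := Real.exp_le_one_iff.mpr ha
  have h2 : (b - a) + 1 ≤ Real.exp (b - a) := Real.add_one_le_exp _
  have h3 : Real.exp b = Real.exp a * Real.exp (b - a) := by
    rw [← Real.exp_add]; ring_nf
  have h4 : 0 < Real.exp a := Real.exp_pos a
  nlinarith [Real.exp_pos (b - a)]

-- mean value inequality: global Lipschitz bound from bounded fderiv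
lemma lip_of_fderiv_le {X Z : Type*} [NormedAddCommGroup X] [NormedSpace ℝ X]
    [NormedAddCommGroup Z] [NormedSpace ℝ Z]
    {f : X → Z} (hf : Differentiable ℝ f) {C : ℝ}
    (hC : ∀ x, ‖fderiv ℝ f x‖ ≤ C) (a b : X) : ‖f a - f b‖ ≤ C * ‖a - b‖ :=
  Convex.norm_image_sub_le_of_norm_fderiv_le (fun x _ => hf x)
    (fun x _ => hC x) convex_univ (Set.mem_univ b) (Set.mem_univ a)

-- first derivative bound from iterated derivative bound
lemma fderiv_norm_le_of_iter {X Z : Type*} [NormedAddCommGroup X] [NormedSpace ℝ X]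
    [NormedAddCommGroup Z] [NormedSpace ℝ Z] {f : X → Z} {C : ℝ}
    (hC : ∀ x, ‖iteratedFDeriv ℝ 1 f x‖ ≤ C) (x : X) : ‖fderiv ℝ f x‖ ≤ C := by
  have e : ‖fderiv ℝ f x‖ = ‖iteratedFDeriv ℝ 1 f x‖ := by
    rw [← norm_iteratedFDeriv_fderiv, norm_iteratedFDeriv_zero]
  rw [e]; exact hC x

-- second-order Taylor bound
lemma taylor_bound {X Z : Type*} [NormedAddCommGroup X] [NormedSpace ℝ X]
    [NormedAddCommGroup Z] [NormedSpace ℝ Z]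
    {f : X → Z} (hf : ContDiff ℝ 3 f) {C : ℝ}
    (hC2 : ∀ x, ‖iteratedFDeriv ℝ 2 f x‖ ≤ C) (x₀ h : X) :
    ‖f (x₀ + h) - f x₀ - fderiv ℝ f x₀ h‖ ≤ C * ‖h‖ ^ 2 := by
  have hfd : Differentiable ℝ f := hf.differentiable (by norm_num)
  have hf' : ContDiff ℝ 2 (fderiv ℝ f) := hf.fderiv_right (by norm_num)
  have hfd' : Differentiable ℝ (fderiv ℝ f) := hf'.differentiable (by norm_num)
  have hC2' : ∀ x, ‖fderiv ℝ (fderiv ℝ f) x‖ ≤ C := by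
    intro x
    have e : ‖fderiv ℝ (fderiv ℝ f) x‖ = ‖iteratedFDeriv ℝ 2 f x‖ := by
      rw [← norm_iteratedFDeriv_fderiv (n := 1), ← norm_iteratedFDeriv_fderiv (n := 0),
        norm_iteratedFDeriv_zero]
    rw [e]; exact hC2 x
  have hlip : ∀ a b : X, ‖fderiv ℝ f a - fderiv ℝ f b‖ ≤ C * ‖a - b‖ :=
    lip_of_fderiv_le hfd' hC2'
  set A := fderiv ℝ f x₀ with hA
  set g : X → Z := fun y => f y - A y with hg
  have hgd : ∀ y, DifferentiableAt ℝ g y := fun y => (hfd y).sub (A.differentiableAt)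
  have hgf : ∀ y, fderiv ℝ g y = fderiv ℝ f y - A := by
    intro y
    rw [hg]
    rw [fderiv_fun_sub (hfd y) A.differentiableAt, A.fderiv]
  have hball : ∀ y ∈ Metric.closedBall x₀ ‖h‖, ‖fderiv ℝ g y‖ ≤ C * ‖h‖ := by
    intro y hy
    rw [hgf y, hA]
    calc ‖fderiv ℝ f y - fderiv ℝ f x₀‖ ≤ C * ‖y - x₀‖ := hlip y x₀
      _ ≤ C * ‖h‖ := by
          have h0 : 0 ≤ C := le_trans (norm_nonneg _) (hC2 x₀)
          have : ‖y - x₀‖ ≤ ‖h‖ := by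
            rw [← dist_eq_norm]; exact Metric.mem_closedBall.mp hy
          exact mul_le_mul_of_nonneg_left this h0
  have hmem1 : x₀ ∈ Metric.closedBall x₀ ‖h‖ := Metric.mem_closedBall_self (norm_nonneg h)
  have hmem2 : x₀ + h ∈ Metric.closedBall x₀ ‖h‖ := by
    rw [Metric.mem_closedBall, dist_eq_norm, add_sub_cancel_left]
  have key := Convex.norm_image_sub_le_of_norm_fderiv_le
    (fun y _ => hgd y) hball (convex_closedBall x₀ ‖h‖) hmem1 hmem2
  have e1 : g (x₀ + h) - g x₀ = f (x₀ + h) - f x₀ - A h := by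
    rw [hg]
    simp only
    rw [map_add]
    abel
  have e2 : x₀ + h - x₀ = h := by abel
  rw [e1, e2] at key
  calc ‖f (x₀ + h) - f x₀ - A h‖ ≤ C * ‖h‖ * ‖h‖ := key
    _ = C * ‖h‖ ^ 2 := by ring


lemma bilin_bound {K : ℕ} (M : Matrix (Fin K) (Fin K) ℝ) (a b : Fin K → ℝ) :
    |M.mulVec a ⬝ᵥ b| ≤ (∑ i, ∑ j, |M i j|) * ‖a‖ * ‖b‖ := by
  have hib : ∀ (c : Fin K → ℝ) i, |c i| ≤ ‖c‖ := fun c i => by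
    have := norm_le_pi_norm c i
    simpa using this
  calc |M.mulVec a ⬝ᵥ b| = |∑ i, M.mulVec a i * b i| := rfl
    _ ≤ ∑ i, |M.mulVec a i * b i| := Finset.abs_sum_le_sum_abs _ _
    _ ≤ ∑ i, ((∑ j, |M i j|) * ‖a‖) * ‖b‖ := by
        refine Finset.sum_le_sum fun i _ => ?_
        rw [abs_mul]
        refine mul_le_mul ?_ (hib b i) (abs_nonneg _) (by positivity)
        calc |M.mulVec a i| = |∑ j, M i j * a j| := rfl
          _ ≤ ∑ j, |M i j * a j| := Finset.abs_sum_le_sum_abs _ _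
          _ ≤ ∑ j, |M i j| * ‖a‖ := by
              refine Finset.sum_le_sum fun j _ => ?_
              rw [abs_mul]
              exact mul_le_mul_of_nonneg_left (hib a j) (abs_nonneg _)
          _ = (∑ j, |M i j|) * ‖a‖ := by rw [Finset.sum_mul]
    _ = (∑ i, ∑ j, |M i j|) * ‖a‖ * ‖b‖ := by rw [Finset.sum_mul, Finset.sum_mul]

lemma posdef_quad_nonneg {K : ℕ} {M : Matrix (Fin K) (Fin K) ℝ} (hM : M.PosDef)
    (v : Fin K → ℝ) : 0 ≤ M⁻¹.mulVec v ⬝ᵥ v := by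
  have h := hM.inv.posSemidef.dotProduct_mulVec_nonneg v
  simpa [dotProduct_comm] using h

lemma quad_lip {K : ℕ} (M : Matrix (Fin K) (Fin K) ℝ) (va vb : Fin K → ℝ) :
    |M.mulVec va ⬝ᵥ va - M.mulVec vb ⬝ᵥ vb|
      ≤ (∑ i, ∑ j, |M i j|) * (‖va‖ + ‖vb‖) * ‖va - vb‖ := by
  have hid : M.mulVec va ⬝ᵥ va - M.mulVec vb ⬝ᵥ vb
      = M.mulVec (va - vb) ⬝ᵥ va + M.mulVec vb ⬝ᵥ (va - vb) := by
    rw [Matrix.mulVec_sub, sub_dotProduct, dotProduct_sub]; ring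
  rw [hid]
  refine (abs_add_le _ _).trans ?_
  have h1 := bilin_bound M (va - vb) va
  have h2 := bilin_bound M vb (va - vb)
  calc |M.mulVec (va - vb) ⬝ᵥ va| + |M.mulVec vb ⬝ᵥ (va - vb)|
      ≤ (∑ i, ∑ j, |M i j|) * ‖va - vb‖ * ‖va‖ + (∑ i, ∑ j, |M i j|) * ‖vb‖ * ‖va - vb‖ :=
        add_le_add h1 h2
    _ = (∑ i, ∑ j, |M i j|) * (‖va‖ + ‖vb‖) * ‖va - vb‖ := by ring

lemma quad_cont {K : ℕ} {X : Type*} [NormedAddCommGroup X] [NormedSpace ℝ X]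
    (M : Matrix (Fin K) (Fin K) ℝ) (η : Fin K → ℝ) {Q : X → Fin K → ℝ} (hQc : Continuous Q) :
    Continuous fun x : X => M.mulVec (η - Q x) ⬝ᵥ (η - Q x) := by
  simp only [dotProduct, Matrix.mulVec]
  refine continuous_finset_sum _ fun i _ => Continuous.mul ?_ ?_
  · refine continuous_finset_sum _ fun j _ => Continuous.mul continuous_const ?_
    exact continuous_const.sub ((continuous_apply j).comp hQc)
  · exact continuous_const.sub ((continuous_apply i).comp hQc)

lemma abstract_cov_bound
    {Ω : Type*} [MeasurableSpace Ω] (μ : Measure Ω) [IsProbabilityMeasure μ]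
    {X : Type*} [NormedAddCommGroup X] [NormedSpace ℝ X] [CompleteSpace X]
    {Z : Type*} [NormedAddCommGroup Z] [InnerProductSpace ℝ Z] [CompleteSpace Z]
    (w : Ω → ℝ) (ξ : Ω → X) (Y : Ω → Z) (A : X →L[ℝ] Z) (y₀ : Z) (w₀ c L κ : ℝ)
    (hc : 0 < c) (hκ : 0 ≤ κ) (hL : 0 ≤ L)
    (hw_meas : AEStronglyMeasurable w μ)
    (hw_lb : ∀ ω, c ≤ w ω) (hw_ub : ∀ ω, w ω ≤ 1)
    (hw_lip : ∀ ω, |w ω - w₀| ≤ L * ‖ξ ω‖)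
    (hξm : AEStronglyMeasurable ξ μ) (hξ3 : MemLp ξ 3 μ)
    (hξ0 : (∫ ω, ξ ω ∂μ) = 0)
    (hY : MemLp Y 2 μ)
    (hYA : ∀ ω, ‖Y ω - y₀ - A (ξ ω)‖ ≤ κ * ‖ξ ω‖ ^ 2)
    (hYl : ∀ ω, ‖Y ω - y₀‖ ≤ κ * ‖ξ ω‖)
    (hAn : ‖A‖ ≤ κ)
    (u v : Z) :
    |(∫ ω, w ω ∂μ)⁻¹ *
        (∫ ω, w ω * ((inner ℝ (Y ω - (∫ ω', w ω' ∂μ)⁻¹ • (∫ ω', w ω' • Y ω' ∂μ)) u : ℝ) *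
          (inner ℝ (Y ω - (∫ ω', w ω' ∂μ)⁻¹ • (∫ ω', w ω' • Y ω' ∂μ)) v : ℝ)) ∂μ)
      - ∫ ω, (inner ℝ (A (ξ ω)) u : ℝ) * (inner ℝ (A (ξ ω)) v : ℝ) ∂μ|
      ≤ Cfun c L κ * ‖u‖ * ‖v‖ * ((eLpNorm ξ 3 μ).toReal) ^ 3 := by
  set t := (eLpNorm ξ 3 μ).toReal with ht
  have ht0 : 0 ≤ t := ENNReal.toReal_nonneg
  have hc' : (0:ℝ) < c⁻¹ := by positivity
  -- ξ integrability
  have hξ2 : MemLp ξ 2 μ := hξ3.mono_exponent (by norm_num)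
  have hξ1 : MemLp ξ 1 μ := hξ3.mono_exponent (by norm_num)
  have hξI : Integrable ξ μ := memLp_one_iff_integrable.mp hξ1
  have hn1 : Integrable (fun ω => ‖ξ ω‖) μ := hξI.norm
  have hn2 : Integrable (fun ω => ‖ξ ω‖ ^ 2) μ := by
    have := hξ2.integrable_norm_rpow (by norm_num) (by norm_num)
    simpa [ENNReal.toReal_ofNat, Real.rpow_natCast] using this
  have hn3 : Integrable (fun ω => ‖ξ ω‖ ^ 3) μ := by
    have := hξ3.integrable_norm_rpow (by norm_num) (by norm_num)
    refine (integrable_congr ?_).mp this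
    filter_upwards with ω
    rw [show ((3:ℝ≥0∞)).toReal = ((3:ℕ):ℝ) by norm_num, Real.rpow_natCast]
  set s₁ := ∫ ω, ‖ξ ω‖ ∂μ with hs₁
  set s₂ := ∫ ω, ‖ξ ω‖ ^ 2 ∂μ with hs₂
  set s₃ := ∫ ω, ‖ξ ω‖ ^ 3 ∂μ with hs₃
  have hs₁0 : 0 ≤ s₁ := integral_nonneg fun ω => norm_nonneg _
  have hs₂0 : 0 ≤ s₂ := integral_nonneg fun ω => by positivity
  have hs₃0 : 0 ≤ s₃ := integral_nonneg fun ω => by positivity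
  have hs₁t : s₁ ≤ t := by
    have := helper_integral_norm_pow_le μ ξ hξ3 1 one_ne_zero (by norm_num)
    simpa using this
  have hs₂t : s₂ ≤ t ^ 2 := helper_integral_norm_pow_le μ ξ hξ3 2 two_ne_zero (by norm_num)
  have hs₃t : s₃ ≤ t ^ 3 := helper_integral_norm_pow_le μ ξ hξ3 3 three_ne_zero (by norm_num)
  -- weight
  have hwb : ∀ ω, |w ω| ≤ 1 := fun ω => by
    rw [abs_le]; exact ⟨by linarith [hw_lb ω], hw_ub ω⟩
  have hwInt : Integrable w μ := by
    refine Integrable.mono' (integrable_const 1) hw_meas ?_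
    filter_upwards with ω; simpa using hwb ω
  set W := ∫ ω, w ω ∂μ with hW
  have hWc : c ≤ W := by
    have : ∫ (_ : Ω), c ∂μ ≤ W := integral_mono (integrable_const c) hwInt hw_lb
    simpa using this
  have hW0 : 0 < W := lt_of_lt_of_le hc hWc
  have hWinv : W⁻¹ ≤ c⁻¹ := by
    exact inv_anti₀ hc hWc
  -- Y and m
  have hYI : Integrable Y μ := hY.integrable (by norm_num)
  have hAξm : AEStronglyMeasurable (fun ω => A (ξ ω)) μ :=
    A.continuous.comp_aestronglyMeasurable hξm
  have hAξI : Integrable (fun ω => A (ξ ω)) μ := A.integrable_comp hξI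
  have hwY : Integrable (fun ω => w ω • Y ω) μ := by
    refine Integrable.mono' hYI.norm (hw_meas.smul hY.aestronglyMeasurable) ?_
    filter_upwards with ω
    rw [norm_smul, Real.norm_eq_abs]
    exact mul_le_of_le_one_left (norm_nonneg _) (hwb ω)
  set m := W⁻¹ • ∫ ω, w ω • Y ω ∂μ with hm
  set δ := ‖m - y₀‖ with hδ
  have hδ0 : 0 ≤ δ := norm_nonneg _
  have haω : ∀ ω, ‖A (ξ ω)‖ ≤ κ * ‖ξ ω‖ := fun ω =>
    (A.le_opNorm (ξ ω)).trans (mul_le_mul_of_nonneg_right hAn (norm_nonneg _))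
  -- m - y₀ as an integral
  have hmy : m - y₀ = W⁻¹ • ∫ ω, w ω • (Y ω - y₀) ∂μ := by
    have e1 : ∫ ω, w ω • (Y ω - y₀) ∂μ = (∫ ω, w ω • Y ω ∂μ) - W • y₀ := by
      have : (fun ω => w ω • (Y ω - y₀)) = fun ω => w ω • Y ω - w ω • y₀ := by
        funext ω; rw [smul_sub]
      rw [this, integral_sub hwY (hwInt.smul_const y₀), integral_smul_const]
    rw [hm, e1, smul_sub, smul_smul, inv_mul_cancel₀ (ne_of_gt hW0), one_smul]
  have hδ1 : δ ≤ c⁻¹ * (κ * s₁) := by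
    rw [hδ, hmy]
    rw [norm_smul, Real.norm_eq_abs, abs_of_pos (inv_pos.mpr hW0)]
    have hb : ‖∫ ω, w ω • (Y ω - y₀) ∂μ‖ ≤ ∫ ω, κ * ‖ξ ω‖ ∂μ := by
      refine norm_integral_le_of_norm_le (hn1.const_mul κ) ?_
      filter_upwards with ω
      rw [norm_smul, Real.norm_eq_abs]
      calc |w ω| * ‖Y ω - y₀‖ ≤ 1 * ‖Y ω - y₀‖ :=
            mul_le_mul_of_nonneg_right (hwb ω) (norm_nonneg _)
        _ = ‖Y ω - y₀‖ := one_mul _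
        _ ≤ κ * ‖ξ ω‖ := hYl ω
    rw [integral_const_mul] at hb
    exact mul_le_mul hWinv hb (norm_nonneg _) (le_of_lt hc')
  -- sharper bound on δ
  have hint2 : Integrable (fun ω => w ω • (Y ω - y₀ - A (ξ ω))) μ := by
    refine Integrable.mono' (hn2.const_mul κ)
      (hw_meas.smul ((hY.aestronglyMeasurable.sub aestronglyMeasurable_const).sub hAξm)) ?_
    filter_upwards with ω
    rw [norm_smul, Real.norm_eq_abs]
    calc |w ω| * ‖Y ω - y₀ - A (ξ ω)‖ ≤ 1 * ‖Y ω - y₀ - A (ξ ω)‖ :=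
          mul_le_mul_of_nonneg_right (hwb ω) (norm_nonneg _)
      _ = ‖Y ω - y₀ - A (ξ ω)‖ := one_mul _
      _ ≤ κ * ‖ξ ω‖ ^ 2 := hYA ω
  have hint3 : Integrable (fun ω => (w ω - w₀) • A (ξ ω)) μ := by
    refine Integrable.mono' (hn2.const_mul (L * κ))
      ((hw_meas.sub aestronglyMeasurable_const).smul hAξm) ?_
    filter_upwards with ω
    rw [norm_smul, Real.norm_eq_abs]
    calc |w ω - w₀| * ‖A (ξ ω)‖ ≤ (L * ‖ξ ω‖) * (κ * ‖ξ ω‖) :=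
          mul_le_mul (hw_lip ω) (haω ω) (norm_nonneg _) (by positivity)
      _ = L * κ * ‖ξ ω‖ ^ 2 := by ring
  have hδ2 : δ ≤ c⁻¹ * ((1 + L) * κ * s₂) := by
    rw [hδ, hmy]
    rw [norm_smul, Real.norm_eq_abs, abs_of_pos (inv_pos.mpr hW0)]
    have hIA : ∫ ω, A (ξ ω) ∂μ = 0 := by
      rw [A.integral_comp_comm hξI, hξ0, map_zero]
    have hsplit : ∫ ω, w ω • (Y ω - y₀) ∂μ
        = (∫ ω, w ω • (Y ω - y₀ - A (ξ ω)) ∂μ) + (∫ ω, (w ω - w₀) • A (ξ ω) ∂μ) := by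
      have hg3 : Integrable (fun ω => w₀ • A (ξ ω)) μ := hAξI.smul w₀
      have e : ∀ ω, w ω • (Y ω - y₀)
          = (w ω • (Y ω - y₀ - A (ξ ω)) + (w ω - w₀) • A (ξ ω)) + w₀ • A (ξ ω) := by
        intro ω
        rw [smul_sub, smul_sub, smul_sub, sub_smul]
        abel
      calc ∫ ω, w ω • (Y ω - y₀) ∂μ
          = ∫ ω, ((w ω • (Y ω - y₀ - A (ξ ω)) + (w ω - w₀) • A (ξ ω)) + w₀ • A (ξ ω)) ∂μ :=
            integral_congr_ae (Filter.Eventually.of_forall fun ω => e ω)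
        _ = (∫ ω, (w ω • (Y ω - y₀ - A (ξ ω)) + (w ω - w₀) • A (ξ ω)) ∂μ)
              + ∫ ω, w₀ • A (ξ ω) ∂μ := integral_add (hint2.add hint3) hg3
        _ = (∫ ω, w ω • (Y ω - y₀ - A (ξ ω)) ∂μ) + (∫ ω, (w ω - w₀) • A (ξ ω) ∂μ) := by
            rw [integral_add hint2 hint3, integral_smul, hIA, smul_zero, add_zero]
    rw [hsplit]
    have hb1 : ‖∫ ω, w ω • (Y ω - y₀ - A (ξ ω)) ∂μ‖ ≤ κ * s₂ := by
      have h : ‖∫ ω, w ω • (Y ω - y₀ - A (ξ ω)) ∂μ‖ ≤ ∫ ω, κ * ‖ξ ω‖ ^ 2 ∂μ := by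
        refine norm_integral_le_of_norm_le (hn2.const_mul κ) ?_
        filter_upwards with ω
        rw [norm_smul, Real.norm_eq_abs]
        calc |w ω| * ‖Y ω - y₀ - A (ξ ω)‖ ≤ 1 * ‖Y ω - y₀ - A (ξ ω)‖ :=
              mul_le_mul_of_nonneg_right (hwb ω) (norm_nonneg _)
          _ = ‖Y ω - y₀ - A (ξ ω)‖ := one_mul _
          _ ≤ κ * ‖ξ ω‖ ^ 2 := hYA ω
      rwa [integral_const_mul] at h
    have hb2 : ‖∫ ω, (w ω - w₀) • A (ξ ω) ∂μ‖ ≤ L * κ * s₂ := by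
      have h : ‖∫ ω, (w ω - w₀) • A (ξ ω) ∂μ‖ ≤ ∫ ω, L * κ * ‖ξ ω‖ ^ 2 ∂μ := by
        refine norm_integral_le_of_norm_le (hn2.const_mul (L * κ)) ?_
        filter_upwards with ω
        rw [norm_smul, Real.norm_eq_abs]
        calc |w ω - w₀| * ‖A (ξ ω)‖ ≤ (L * ‖ξ ω‖) * (κ * ‖ξ ω‖) :=
              mul_le_mul (hw_lip ω) (haω ω) (norm_nonneg _) (by positivity)
          _ = L * κ * ‖ξ ω‖ ^ 2 := by ring
      rwa [integral_const_mul] at h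
    calc W⁻¹ * ‖(∫ ω, w ω • (Y ω - y₀ - A (ξ ω)) ∂μ) + (∫ ω, (w ω - w₀) • A (ξ ω) ∂μ)‖
        ≤ c⁻¹ * (κ * s₂ + L * κ * s₂) := by
          refine mul_le_mul hWinv ((norm_add_le _ _).trans (add_le_add hb1 hb2)) (norm_nonneg _) (le_of_lt hc')
      _ = c⁻¹ * ((1 + L) * κ * s₂) := by ring

  -- delta vs t
  have hKd0 : 0 ≤ Kdel c L κ := by
    unfold Kdel
    have : 0 ≤ (1 + L) * κ := mul_nonneg (by linarith) hκ
    positivity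
  have hδt : δ ≤ Kdel c L κ * t := by
    calc δ ≤ c⁻¹ * (κ * s₁) := hδ1
      _ ≤ c⁻¹ * ((1 + L) * κ * t) := by
          apply mul_le_mul_of_nonneg_left _ (le_of_lt hc')
          have h1 : κ * s₁ ≤ κ * t := mul_le_mul_of_nonneg_left hs₁t hκ
          nlinarith [mul_nonneg hκ ht0, mul_nonneg hL (mul_nonneg hκ ht0)]
      _ = Kdel c L κ * t := by unfold Kdel; ring
  have hδt2 : δ ≤ Kdel c L κ * t ^ 2 := by
    calc δ ≤ c⁻¹ * ((1 + L) * κ * s₂) := hδ2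
      _ ≤ c⁻¹ * ((1 + L) * κ * t ^ 2) := by
          apply mul_le_mul_of_nonneg_left _ (le_of_lt hc')
          exact mul_le_mul_of_nonneg_left hs₂t (mul_nonneg (by linarith) hκ)
      _ = Kdel c L κ * t ^ 2 := by unfold Kdel; ring
  -- pointwise bounds for E := Y - m - Aξ
  have hE1 : ∀ ω, ‖Y ω - m - A (ξ ω)‖ ≤ κ * ‖ξ ω‖ ^ 2 + δ := by
    intro ω
    have e : Y ω - m - A (ξ ω) = (Y ω - y₀ - A (ξ ω)) - (m - y₀) := by abel
    rw [e]
    exact (norm_sub_le _ _).trans (add_le_add (hYA ω) (le_refl δ))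
  have hE2 : ∀ ω, ‖Y ω - m - A (ξ ω)‖ ≤ 2 * κ * ‖ξ ω‖ + δ := by
    intro ω
    have e : Y ω - m - A (ξ ω) = ((Y ω - y₀) - A (ξ ω)) - (m - y₀) := by abel
    rw [e]
    refine (norm_sub_le _ _).trans (add_le_add ((norm_sub_le _ _).trans ?_) (le_refl δ))
    calc ‖Y ω - y₀‖ + ‖A (ξ ω)‖ ≤ κ * ‖ξ ω‖ + κ * ‖ξ ω‖ := add_le_add (hYl ω) (haω ω)
      _ = 2 * κ * ‖ξ ω‖ := by ring
  -- |w - W| bound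
  have hW₀ : |w₀ - W| ≤ L * s₁ := by
    have e : w₀ - W = ∫ ω, (w₀ - w ω) ∂μ := by
      rw [integral_sub (integrable_const w₀) hwInt, integral_const]
      simp [hW]
    rw [e]
    have h : ‖∫ ω, (w₀ - w ω) ∂μ‖ ≤ ∫ ω, L * ‖ξ ω‖ ∂μ := by
      refine norm_integral_le_of_norm_le (hn1.const_mul L) ?_
      filter_upwards with ω
      rw [Real.norm_eq_abs, abs_sub_comm]
      exact hw_lip ω
    rw [integral_const_mul] at h
    exact h
  have hwW : ∀ ω, |w ω - W| ≤ L * ‖ξ ω‖ + L * s₁ := by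
    intro ω
    calc |w ω - W| = |(w ω - w₀) + (w₀ - W)| := by ring_nf
      _ ≤ |w ω - w₀| + |w₀ - W| := abs_add_le _ _
      _ ≤ L * ‖ξ ω‖ + L * s₁ := add_le_add (hw_lip ω) hW₀
  -- integrability of main integrands
  have hYm2 : MemLp (fun ω => Y ω - m) 2 μ := hY.sub (memLp_const m)
  have hfu : MemLp (fun ω => (inner ℝ (Y ω - m) u : ℝ)) 2 μ := hYm2.inner_const u
  have hfv : MemLp (fun ω => (inner ℝ (Y ω - m) v : ℝ)) 2 μ := hYm2.inner_const v
  have hPint : Integrable (fun ω => (inner ℝ (Y ω - m) u : ℝ) * (inner ℝ (Y ω - m) v : ℝ)) μ :=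
    helper_integrable_mul hfu hfv
  have hwP : Integrable (fun ω =>
      w ω * ((inner ℝ (Y ω - m) u : ℝ) * (inner ℝ (Y ω - m) v : ℝ))) μ :=
    hPint.bdd_mul hw_meas (Filter.Eventually.of_forall fun ω => by
      rw [Real.norm_eq_abs]; exact hwb ω)
  have hAξ2 : MemLp (fun ω => A (ξ ω)) 2 μ :=
    hξ2.of_le_mul hAξm (Filter.Eventually.of_forall fun ω => haω ω)
  have hgu : MemLp (fun ω => (inner ℝ (A (ξ ω)) u : ℝ)) 2 μ := hAξ2.inner_const u
  have hgv : MemLp (fun ω => (inner ℝ (A (ξ ω)) v : ℝ)) 2 μ := hAξ2.inner_const v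
  have hqint : Integrable (fun ω => (inner ℝ (A (ξ ω)) u : ℝ) * (inner ℝ (A (ξ ω)) v : ℝ)) μ :=
    helper_integrable_mul hgu hgv
  -- constants
  set a3 := 4 * κ ^ 2 + L * κ ^ 2 with ha3
  set a2 := κ * δ + L * κ ^ 2 * s₁ with ha2
  set a1 := 4 * κ * δ with ha1
  have ha30 : 0 ≤ a3 := by rw [ha3]; exact add_nonneg (by positivity) (mul_nonneg hL (sq_nonneg κ))
  have ha20 : 0 ≤ a2 := by
    rw [ha2]
    exact add_nonneg (mul_nonneg hκ hδ0) (mul_nonneg (mul_nonneg hL (sq_nonneg κ)) hs₁0)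
  have ha10 : 0 ≤ a1 := by rw [ha1]; positivity
  -- the majorant
  have hGint : Integrable (fun ω =>
      ‖u‖ * ‖v‖ * (a3 * ‖ξ ω‖ ^ 3 + (a2 * ‖ξ ω‖ ^ 2 + (a1 * ‖ξ ω‖ + δ ^ 2)))) μ :=
    (((hn3.const_mul a3).add ((hn2.const_mul a2).add ((hn1.const_mul a1).add
      (integrable_const (δ ^ 2))))).const_mul (‖u‖ * ‖v‖))
  -- pointwise master bound
  have hptw : ∀ ω, |w ω * ((inner ℝ (Y ω - m) u : ℝ) * (inner ℝ (Y ω - m) v : ℝ))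
        - W * ((inner ℝ (A (ξ ω)) u : ℝ) * (inner ℝ (A (ξ ω)) v : ℝ))|
      ≤ ‖u‖ * ‖v‖ * (a3 * ‖ξ ω‖ ^ 3 + (a2 * ‖ξ ω‖ ^ 2 + (a1 * ‖ξ ω‖ + δ ^ 2))) := by
    intro ω
    set x := ‖ξ ω‖ with hx
    have hx0 : 0 ≤ x := norm_nonneg _
    set e := Y ω - m - A (ξ ω) with he
    have hsum : Y ω - m = A (ξ ω) + e := by rw [he]; abel
    have he1 : ‖e‖ ≤ κ * x ^ 2 + δ := hE1 ω
    have he2 : ‖e‖ ≤ 2 * κ * x + δ := hE2 ω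
    have hdiff : (inner ℝ (Y ω - m) u : ℝ) * (inner ℝ (Y ω - m) v : ℝ)
        - (inner ℝ (A (ξ ω)) u : ℝ) * (inner ℝ (A (ξ ω)) v : ℝ)
        = (inner ℝ (A (ξ ω)) u : ℝ) * (inner ℝ e v : ℝ)
          + ((inner ℝ e u : ℝ) * (inner ℝ (A (ξ ω)) v : ℝ) + (inner ℝ e u : ℝ) * (inner ℝ e v : ℝ)) := by
      rw [hsum]
      simp only [inner_add_left]
      ring
    have hS1 : |(inner ℝ (Y ω - m) u : ℝ) * (inner ℝ (Y ω - m) v : ℝ)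
        - (inner ℝ (A (ξ ω)) u : ℝ) * (inner ℝ (A (ξ ω)) v : ℝ)|
        ≤ ((κ * x) * (κ * x ^ 2 + δ)) * (‖u‖ * ‖v‖)
          + (((κ * x ^ 2 + δ) * (κ * x)) * (‖u‖ * ‖v‖)
            + ((κ * x ^ 2 + δ) * (2 * κ * x + δ)) * (‖u‖ * ‖v‖)) := by
      rw [hdiff]
      refine (abs_add_le _ _).trans (add_le_add ?_ ((abs_add_le _ _).trans (add_le_add ?_ ?_)))
      · exact inner_mul_inner_le _ _ u v _ _ (haω ω) he1
      · exact inner_mul_inner_le _ _ u v _ _ he1 (haω ω)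
      · exact inner_mul_inner_le _ _ u v _ _ he1 he2
    have hq1 : |(inner ℝ (A (ξ ω)) u : ℝ) * (inner ℝ (A (ξ ω)) v : ℝ)|
        ≤ ((κ * x) * (κ * x)) * (‖u‖ * ‖v‖) :=
      inner_mul_inner_le _ _ u v _ _ (haω ω) (haω ω)
    have split : w ω * ((inner ℝ (Y ω - m) u : ℝ) * (inner ℝ (Y ω - m) v : ℝ))
        - W * ((inner ℝ (A (ξ ω)) u : ℝ) * (inner ℝ (A (ξ ω)) v : ℝ))
        = w ω * ((inner ℝ (Y ω - m) u : ℝ) * (inner ℝ (Y ω - m) v : ℝ)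
            - (inner ℝ (A (ξ ω)) u : ℝ) * (inner ℝ (A (ξ ω)) v : ℝ))
          + (w ω - W) * ((inner ℝ (A (ξ ω)) u : ℝ) * (inner ℝ (A (ξ ω)) v : ℝ)) := by ring
    rw [split]
    calc |w ω * ((inner ℝ (Y ω - m) u : ℝ) * (inner ℝ (Y ω - m) v : ℝ)
            - (inner ℝ (A (ξ ω)) u : ℝ) * (inner ℝ (A (ξ ω)) v : ℝ))
          + (w ω - W) * ((inner ℝ (A (ξ ω)) u : ℝ) * (inner ℝ (A (ξ ω)) v : ℝ))|
        ≤ |w ω| * |(inner ℝ (Y ω - m) u : ℝ) * (inner ℝ (Y ω - m) v : ℝ)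
            - (inner ℝ (A (ξ ω)) u : ℝ) * (inner ℝ (A (ξ ω)) v : ℝ)|
          + |w ω - W| * |(inner ℝ (A (ξ ω)) u : ℝ) * (inner ℝ (A (ξ ω)) v : ℝ)| := by
          refine (abs_add_le _ _).trans ?_
          rw [abs_mul, abs_mul]
      _ ≤ 1 * (((κ * x) * (κ * x ^ 2 + δ)) * (‖u‖ * ‖v‖)
            + (((κ * x ^ 2 + δ) * (κ * x)) * (‖u‖ * ‖v‖)
              + ((κ * x ^ 2 + δ) * (2 * κ * x + δ)) * (‖u‖ * ‖v‖)))
          + (L * x + L * s₁) * (((κ * x) * (κ * x)) * (‖u‖ * ‖v‖)) := by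
          refine add_le_add (mul_le_mul (hwb ω) hS1 (abs_nonneg _) zero_le_one)
            (mul_le_mul (hwW ω) hq1 (abs_nonneg _) ?_)
          exact add_nonneg (mul_nonneg hL hx0) (mul_nonneg hL hs₁0)
      _ = ‖u‖ * ‖v‖ * (a3 * x ^ 3 + (a2 * x ^ 2 + (a1 * x + δ ^ 2))) := by
          rw [ha3, ha2, ha1]; ring

  -- value of the majorant integral
  have hGval : (∫ ω, ‖u‖ * ‖v‖ * (a3 * ‖ξ ω‖ ^ 3 + (a2 * ‖ξ ω‖ ^ 2 + (a1 * ‖ξ ω‖ + δ ^ 2))) ∂μ)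
      = ‖u‖ * ‖v‖ * (a3 * s₃ + (a2 * s₂ + (a1 * s₁ + δ ^ 2))) := by
    have hI0 : Integrable (fun ω => a1 * ‖ξ ω‖ + δ ^ 2) μ := by
      exact (hn1.const_mul a1).add (integrable_const (δ ^ 2))
    have hI1 : Integrable (fun ω => a2 * ‖ξ ω‖ ^ 2 + (a1 * ‖ξ ω‖ + δ ^ 2)) μ := by
      exact (hn2.const_mul a2).add hI0
    have i1 : ∫ ω, (a1 * ‖ξ ω‖ + δ ^ 2) ∂μ = a1 * s₁ + δ ^ 2 := by
      rw [integral_add (hn1.const_mul a1) (integrable_const (δ ^ 2)), integral_const_mul,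
        integral_const]
      simp [hs₁]
    have i2 : ∫ ω, (a2 * ‖ξ ω‖ ^ 2 + (a1 * ‖ξ ω‖ + δ ^ 2)) ∂μ = a2 * s₂ + (a1 * s₁ + δ ^ 2) := by
      rw [integral_add (hn2.const_mul a2) hI0, integral_const_mul, i1]
    rw [integral_const_mul]
    congr 1
    rw [integral_add (hn3.const_mul a3) hI1, integral_const_mul, i2]
  have hWq : Integrable (fun ω =>
      W * ((inner ℝ (A (ξ ω)) u : ℝ) * (inner ℝ (A (ξ ω)) v : ℝ))) μ := hqint.const_mul W
  have key : W⁻¹ * (∫ ω, w ω * ((inner ℝ (Y ω - m) u : ℝ) * (inner ℝ (Y ω - m) v : ℝ)) ∂μ)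
      - (∫ ω, (inner ℝ (A (ξ ω)) u : ℝ) * (inner ℝ (A (ξ ω)) v : ℝ) ∂μ)
      = W⁻¹ * ∫ ω, (w ω * ((inner ℝ (Y ω - m) u : ℝ) * (inner ℝ (Y ω - m) v : ℝ))
          - W * ((inner ℝ (A (ξ ω)) u : ℝ) * (inner ℝ (A (ξ ω)) v : ℝ))) ∂μ := by
    rw [integral_sub hwP hWq, integral_const_mul, mul_sub, ← mul_assoc,
      inv_mul_cancel₀ (ne_of_gt hW0), one_mul]
  rw [key, abs_mul, abs_of_pos (inv_pos.mpr hW0)]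
  have habs : |∫ ω, (w ω * ((inner ℝ (Y ω - m) u : ℝ) * (inner ℝ (Y ω - m) v : ℝ))
          - W * ((inner ℝ (A (ξ ω)) u : ℝ) * (inner ℝ (A (ξ ω)) v : ℝ))) ∂μ|
      ≤ ‖u‖ * ‖v‖ * (a3 * s₃ + (a2 * s₂ + (a1 * s₁ + δ ^ 2))) := by
    rw [← hGval, ← Real.norm_eq_abs]
    refine norm_integral_le_of_norm_le hGint ?_
    filter_upwards with ω
    rw [Real.norm_eq_abs]
    exact hptw ω
  have hsum : a3 * s₃ + (a2 * s₂ + (a1 * s₁ + δ ^ 2))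
      ≤ (4*κ^2 + 2*L*κ^2 + κ * Kdel c L κ + 4*κ * Kdel c L κ + (Kdel c L κ)^2) * t ^ 3 := by
    have e1 : a3 * s₃ ≤ a3 * t ^ 3 := mul_le_mul_of_nonneg_left hs₃t ha30
    have ha2le : a2 ≤ κ * (Kdel c L κ * t) + L * κ ^ 2 * t := by
      rw [ha2]
      exact add_le_add (mul_le_mul_of_nonneg_left hδt hκ)
        (mul_le_mul_of_nonneg_left hs₁t (mul_nonneg hL (sq_nonneg κ)))
    have e2 : a2 * s₂ ≤ (κ * (Kdel c L κ * t) + L * κ ^ 2 * t) * t ^ 2 :=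
      mul_le_mul ha2le hs₂t hs₂0
        (add_nonneg (mul_nonneg hκ (mul_nonneg hKd0 ht0))
          (mul_nonneg (mul_nonneg hL (sq_nonneg κ)) ht0))
    have ha1le : a1 ≤ 4 * κ * (Kdel c L κ * t ^ 2) := by
      rw [ha1]
      exact mul_le_mul_of_nonneg_left hδt2 (mul_nonneg (by norm_num) hκ)
    have e3 : a1 * s₁ ≤ (4 * κ * (Kdel c L κ * t ^ 2)) * t :=
      mul_le_mul ha1le hs₁t hs₁0
        (mul_nonneg (mul_nonneg (by norm_num) hκ) (mul_nonneg hKd0 (by positivity)))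
    have e4 : δ ^ 2 ≤ (Kdel c L κ * t) * (Kdel c L κ * t ^ 2) := by
      rw [sq]
      exact mul_le_mul hδt hδt2 hδ0 (mul_nonneg hKd0 ht0)
    calc a3 * s₃ + (a2 * s₂ + (a1 * s₁ + δ ^ 2))
        ≤ a3 * t ^ 3 + ((κ * (Kdel c L κ * t) + L * κ ^ 2 * t) * t ^ 2
            + ((4 * κ * (Kdel c L κ * t ^ 2)) * t + (Kdel c L κ * t) * (Kdel c L κ * t ^ 2))) :=
          add_le_add e1 (add_le_add e2 (add_le_add e3 e4))
      _ = (4*κ^2 + 2*L*κ^2 + κ * Kdel c L κ + 4*κ * Kdel c L κ + (Kdel c L κ)^2) * t ^ 3 := by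
          rw [ha3]; ring
  calc W⁻¹ * |∫ ω, (w ω * ((inner ℝ (Y ω - m) u : ℝ) * (inner ℝ (Y ω - m) v : ℝ))
          - W * ((inner ℝ (A (ξ ω)) u : ℝ) * (inner ℝ (A (ξ ω)) v : ℝ))) ∂μ|
      ≤ c⁻¹ * (‖u‖ * ‖v‖ * ((4*κ^2 + 2*L*κ^2 + κ * Kdel c L κ + 4*κ * Kdel c L κ
          + (Kdel c L κ)^2) * t ^ 3)) := by
        refine mul_le_mul hWinv (habs.trans ?_) (abs_nonneg _) (le_of_lt hc')
        exact mul_le_mul_of_nonneg_left hsum (by positivity)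
    _ = Cfun c L κ * ‖u‖ * ‖v‖ * t ^ 3 := by unfold Cfun; ring


/-- Leading-order posterior covariance: under the centered third-order assumptions, the
posterior covariance of `R(x₀+ξ)` equals the prior correlation of the linearization,
`Cov_{μ^δ}[R(x₀+ξ)] = E[DR(x₀)[ξ] ⊗ DR(x₀)[ξ]] + O(‖ξ‖³_{L³})`, stated in weak
(tensor-testing) form; in particular the leading term is independent of the data `η`. -/
theorem posterior_covariance_leading_order
    {Ω : Type*} [MeasurableSpace Ω] (μ : Measure Ω) [IsProbabilityMeasure μ]
    {X : Type*} [NormedAddCommGroup X] [NormedSpace ℝ X] [CompleteSpace X]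
    {Z : Type*} [NormedAddCommGroup Z] [InnerProductSpace ℝ Z] [CompleteSpace Z]
    {K : ℕ} (S : Matrix (Fin K) (Fin K) ℝ) (hSsymm : S.IsSymm) (hSpos : S.PosDef)
    (η : Fin K → ℝ)
    (Q : X → Fin K → ℝ) (hQ : ContDiff ℝ 3 Q)
    (CQ : ℝ) (hCQ : ∀ j ≤ 3, ∀ x : X, ‖iteratedFDeriv ℝ j Q x‖ ≤ CQ)
    (R : X → Z) (hR : ContDiff ℝ 3 R)
    (CR : ℝ) (hCR : ∀ j ≤ 3, ∀ x : X, ‖iteratedFDeriv ℝ j R x‖ ≤ CR)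
    (x₀ : X) :
    ∃ C : ℝ, 0 < C ∧
      ∀ ξ : Ω → X, AEStronglyMeasurable ξ μ → MemLp ξ 3 μ →
        (∫ ω, ξ ω ∂μ) = 0 →
        MemLp (fun ω => R (x₀ + ξ ω)) 2 μ →
        ∀ u v : Z,
          |(∫ ω, Real.exp (-(1/2) *
                (S⁻¹.mulVec (η - Q (x₀ + ξ ω)) ⬝ᵥ (η - Q (x₀ + ξ ω)))) ∂μ)⁻¹ *
              (∫ ω, Real.exp (-(1/2) *
                  (S⁻¹.mulVec (η - Q (x₀ + ξ ω)) ⬝ᵥ (η - Q (x₀ + ξ ω)))) *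
                ((inner ℝ (R (x₀ + ξ ω) -
                    (∫ ω', Real.exp (-(1/2) *
                      (S⁻¹.mulVec (η - Q (x₀ + ξ ω')) ⬝ᵥ (η - Q (x₀ + ξ ω')))) ∂μ)⁻¹ •
                    (∫ ω', Real.exp (-(1/2) *
                      (S⁻¹.mulVec (η - Q (x₀ + ξ ω')) ⬝ᵥ (η - Q (x₀ + ξ ω')))) •
                      R (x₀ + ξ ω') ∂μ)) u : ℝ) *
                 (inner ℝ (R (x₀ + ξ ω) -
                    (∫ ω', Real.exp (-(1/2) *
                      (S⁻¹.mulVec (η - Q (x₀ + ξ ω')) ⬝ᵥ (η - Q (x₀ + ξ ω')))) ∂μ)⁻¹ •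
                    (∫ ω', Real.exp (-(1/2) *
                      (S⁻¹.mulVec (η - Q (x₀ + ξ ω')) ⬝ᵥ (η - Q (x₀ + ξ ω')))) •
                      R (x₀ + ξ ω') ∂μ)) v : ℝ)) ∂μ)
            - ∫ ω, (inner ℝ (fderiv ℝ R x₀ (ξ ω)) u : ℝ) *
                (inner ℝ (fderiv ℝ R x₀ (ξ ω)) v : ℝ) ∂μ| ≤
          C * ‖u‖ * ‖v‖ * ((eLpNorm ξ 3 μ).toReal) ^ 3 := by
  have hCQ0 : 0 ≤ CQ := le_trans (norm_nonneg (iteratedFDeriv ℝ 0 Q x₀)) (hCQ 0 (by norm_num) x₀)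
  have hCR0 : 0 ≤ CR := le_trans (norm_nonneg (iteratedFDeriv ℝ 0 R x₀)) (hCR 0 (by norm_num) x₀)
  have hQb : ∀ x, ‖Q x‖ ≤ CQ := fun x => by
    rw [← norm_iteratedFDeriv_zero (𝕜 := ℝ) (f := Q) (x := x)]
    exact hCQ 0 (by norm_num) x
  have hQlip : ∀ a b : X, ‖Q a - Q b‖ ≤ CQ * ‖a - b‖ :=
    lip_of_fderiv_le (hQ.differentiable (by norm_num))
      (fderiv_norm_le_of_iter (fun x => hCQ 1 (by norm_num) x))
  have hRf : ∀ x, ‖fderiv ℝ R x‖ ≤ CR :=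
    fderiv_norm_le_of_iter (fun x => hCR 1 (by norm_num) x)
  have hRlip : ∀ a b : X, ‖R a - R b‖ ≤ CR * ‖a - b‖ :=
    lip_of_fderiv_le (hR.differentiable (by norm_num)) hRf
  have hTay : ∀ h : X, ‖R (x₀ + h) - R x₀ - fderiv ℝ R x₀ h‖ ≤ CR * ‖h‖ ^ 2 :=
    taylor_bound hR (fun x => hCR 2 (by norm_num) x) x₀
  -- constants
  set MS : ℝ := ∑ i, ∑ j, |S⁻¹ i j| with hMS
  have hMS0 : 0 ≤ MS := Finset.sum_nonneg fun i _ => Finset.sum_nonneg fun j _ => abs_nonneg _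
  set Mv : ℝ := ‖η‖ + CQ with hMv
  have hMv0 : 0 ≤ Mv := add_nonneg (norm_nonneg _) hCQ0
  set B : ℝ := MS * Mv ^ 2 with hB
  have hB0 : 0 ≤ B := by positivity
  set cc : ℝ := Real.exp (-(1/2) * B) with hcc
  have hcc0 : 0 < cc := Real.exp_pos _
  set LL : ℝ := MS * Mv * CQ with hLL
  have hLL0 : 0 ≤ LL := by positivity
  have hKd0 : 0 ≤ Kdel cc LL CR := by
    unfold Kdel
    exact mul_nonneg (inv_nonneg.mpr hcc0.le) (mul_nonneg (by linarith) hCR0)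
  have hCf0 : 0 ≤ Cfun cc LL CR := by
    unfold Cfun
    refine mul_nonneg (inv_nonneg.mpr hcc0.le) ?_
    have h1 : 0 ≤ 2*LL*CR^2 := by positivity
    have h2 : 0 ≤ CR * Kdel cc LL CR := mul_nonneg hCR0 hKd0
    nlinarith [sq_nonneg CR, sq_nonneg (Kdel cc LL CR)]
  refine ⟨Cfun cc LL CR + 1, by linarith, ?_⟩
  intro ξ hξm hξ3 hξ0 hYmem u v
  -- facts about the quadratic form
  have hv : ∀ x : X, ‖η - Q x‖ ≤ Mv := fun x => by
    rw [hMv]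
    exact (norm_sub_le η (Q x)).trans (add_le_add_right (hQb x) _)
  have hφ0 : ∀ x : X, 0 ≤ S⁻¹.mulVec (η - Q x) ⬝ᵥ (η - Q x) :=
    fun x => posdef_quad_nonneg hSpos _
  have hφB : ∀ x : X, S⁻¹.mulVec (η - Q x) ⬝ᵥ (η - Q x) ≤ B := by
    intro x
    refine (le_abs_self _).trans ((bilin_bound S⁻¹ _ _).trans ?_)
    rw [← hMS, hB]
    calc MS * ‖η - Q x‖ * ‖η - Q x‖ ≤ MS * Mv * Mv := by
          refine mul_le_mul (mul_le_mul_of_nonneg_left (hv x) hMS0) (hv x) (norm_nonneg _)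
            (mul_nonneg hMS0 hMv0)
      _ = MS * Mv ^ 2 := by ring
  have hφlip : ∀ a : X, |S⁻¹.mulVec (η - Q a) ⬝ᵥ (η - Q a)
      - S⁻¹.mulVec (η - Q x₀) ⬝ᵥ (η - Q x₀)| ≤ (2 * LL) * ‖a - x₀‖ := by
    intro a
    have h := quad_lip S⁻¹ (η - Q a) (η - Q x₀)
    rw [← hMS] at h
    have hsub : (η - Q a) - (η - Q x₀) = Q x₀ - Q a := by abel
    rw [hsub] at h
    refine h.trans ?_
    calc MS * (‖η - Q a‖ + ‖η - Q x₀‖) * ‖Q x₀ - Q a‖ ≤ MS * (Mv + Mv) * (CQ * ‖x₀ - a‖) := by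
          refine mul_le_mul (mul_le_mul_of_nonneg_left (add_le_add (hv a) (hv x₀)) hMS0)
            (hQlip x₀ a) (norm_nonneg _) ?_
          exact mul_nonneg hMS0 (by linarith)
      _ = (2 * LL) * ‖a - x₀‖ := by rw [hLL, norm_sub_rev]; ring
  -- the weight function
  set w : Ω → ℝ := fun ω => Real.exp (-(1/2) *
    (S⁻¹.mulVec (η - Q (x₀ + ξ ω)) ⬝ᵥ (η - Q (x₀ + ξ ω)))) with hw
  set w₀ : ℝ := Real.exp (-(1/2) * (S⁻¹.mulVec (η - Q x₀) ⬝ᵥ (η - Q x₀))) with hw₀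
  have hw_meas : AEStronglyMeasurable w μ := by
    have hcont : Continuous fun x : X => Real.exp (-(1/2) *
        (S⁻¹.mulVec (η - Q x) ⬝ᵥ (η - Q x))) :=
      Real.continuous_exp.comp (continuous_const.mul (quad_cont S⁻¹ η hQ.continuous))
    have : AEStronglyMeasurable (fun ω => x₀ + ξ ω) μ :=
      aestronglyMeasurable_const.add hξm
    exact hcont.comp_aestronglyMeasurable this
  have hw_lb : ∀ ω, cc ≤ w ω := by
    intro ω
    rw [hw, hcc]
    exact Real.exp_le_exp.mpr (by nlinarith [hφB (x₀ + ξ ω)])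
  have hw_ub : ∀ ω, w ω ≤ 1 := by
    intro ω
    rw [hw]
    exact Real.exp_le_one_iff.mpr (by nlinarith [hφ0 (x₀ + ξ ω)])
  have hw_lip : ∀ ω, |w ω - w₀| ≤ LL * ‖ξ ω‖ := by
    intro ω
    rw [hw, hw₀]
    refine (exp_lip_nonpos (by nlinarith [hφ0 (x₀ + ξ ω)]) (by nlinarith [hφ0 x₀])).trans ?_
    have e : -(1/2) * (S⁻¹.mulVec (η - Q (x₀ + ξ ω)) ⬝ᵥ (η - Q (x₀ + ξ ω)))
        - -(1/2) * (S⁻¹.mulVec (η - Q x₀) ⬝ᵥ (η - Q x₀))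
        = -(1/2) * ((S⁻¹.mulVec (η - Q (x₀ + ξ ω)) ⬝ᵥ (η - Q (x₀ + ξ ω)))
          - (S⁻¹.mulVec (η - Q x₀) ⬝ᵥ (η - Q x₀))) := by ring
    rw [e, abs_mul]
    have h := hφlip (x₀ + ξ ω)
    rw [add_sub_cancel_left] at h
    calc |(-(1/2) : ℝ)| * |(S⁻¹.mulVec (η - Q (x₀ + ξ ω)) ⬝ᵥ (η - Q (x₀ + ξ ω)))
          - (S⁻¹.mulVec (η - Q x₀) ⬝ᵥ (η - Q x₀))|
        ≤ (1/2) * ((2 * LL) * ‖ξ ω‖) := by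
          rw [show |(-(1/2) : ℝ)| = (1/2) by norm_num]
          exact mul_le_mul_of_nonneg_left h (by norm_num)
      _ = LL * ‖ξ ω‖ := by ring
  have hYA : ∀ ω, ‖R (x₀ + ξ ω) - R x₀ - (fderiv ℝ R x₀) (ξ ω)‖ ≤ CR * ‖ξ ω‖ ^ 2 :=
    fun ω => hTay (ξ ω)
  have hYl : ∀ ω, ‖R (x₀ + ξ ω) - R x₀‖ ≤ CR * ‖ξ ω‖ := by
    intro ω
    have := hRlip (x₀ + ξ ω) x₀
    rwa [add_sub_cancel_left] at this
  have H := abstract_cov_bound μ w ξ (fun ω => R (x₀ + ξ ω)) (fderiv ℝ R x₀) (R x₀) w₀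
    cc LL CR hcc0 hCR0 hLL0 hw_meas hw_lb hw_ub hw_lip hξm hξ3 hξ0 hYmem hYA hYl (hRf x₀) u v
  refine le_trans H ?_
  have hnn : 0 ≤ ‖u‖ * ‖v‖ * ((eLpNorm ξ 3 μ).toReal) ^ 3 := by positivity
  nlinarith [hnn]
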